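/- arXiv:2308.16395 — 5 statements merged into one kernel-verified Lean document; each statement's English description precedes it below -/
import Mathlib

section
/- Let A ∈ ℝ^{m×n}, let U ∈ ℝ^{m×r} have orthonormal columns (UᵀU = I_r), let V ∈ ℝ^{r×n} and Q ∈ ℝ^{s×n} have orthonormal rows (VVᵀ = I_r, QQᵀ = I_s) with mutually orthogonal row spans (VQᵀ = 0), and let S ∈ ℝ^{r×r}, E ∈ ℝ^{m×n} with A = U S V + E and UᵀE = 0. Let B ∈ ℝ^{p×n} be given by B = P V + L Q for some P ∈ ℝ^{p×r}, L ∈ ℝ^{p×s}. Let S′ be the (r+p)×(r+s) block matrix [[S, 0], [P, L]], and suppose S′ = U′ S̃ V′ + E′ for some matrices U′ ∈ ℝ^{(r+p)×r̃}, S̃ ∈ ℝ^{r̃×r̃}, V′ ∈ ℝ^{r̃×(r+s)}, E′ ∈ ℝ^{(r+p)×(r+s)}. Define Ũ = blkdiag(U, I_p)·U′ ∈ ℝ^{(m+p)×r̃} and Ṽ = V′·[V; Q] ∈ ℝ^{r̃×n}, and let Ã = [A; B] ∈ ℝ^{(m+p)×n} be the vertical concatenation of A and B. Then ‖Ã − Ũ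 S̃ Ṽ‖_F² = ‖E‖_F² + ‖E′‖_F², where ‖·‖_F denotes the Frobenius norm. -/
open Matrix BigOperators

/-- Squared Frobenius norm of a real matrix. -/
noncomputable def frobSq {m n : Type*} [Fintype m] [Fintype n] (M : Matrix m n ℝ) : ℝ :=
  ∑ i, ∑ j, (M i j) ^ 2

/-!
The residual splits as `[E; 0] + blkdiag(U, I) E' [V; Q]`. The second summand lies in the column
span of `blkdiag(U, I)`, which is orthogonal to `[E; 0]` because `Uᵀ E = 0`, so the squared norms
add (Pythagoras). Multiplying on the left by a matrix with orthonormal columns and on the right by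
one with orthonormal rows does not change the Frobenius norm, so the second summand contributes
exactly `‖E'‖²`.
-/

section Frobenius

variable {m n k : Type*} [Fintype m] [Fintype n] [Fintype k]

theorem frobSq_eq_trace_transpose_mul (M : Matrix m n ℝ) : frobSq M = trace (Mᵀ * M) := by
  rw [frobSq, Finset.sum_comm]
  simp [trace, mul_apply, sq]

theorem frobSq_eq_trace_mul_transpose (M : Matrix m n ℝ) : frobSq M = trace (M * Mᵀ) := by
  simp [frobSq, trace, mul_apply, sq]

theorem frobSq_zero : frobSq (0 : Matrix m n ℝ) = 0 := by
  simp [frobSq]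

theorem frobSq_fromRows (X : Matrix m n ℝ) (Y : Matrix k n ℝ) :
    frobSq (fromRows X Y) = frobSq X + frobSq Y := by
  simp [frobSq, Fintype.sum_sum_type]

theorem frobSq_add_of_transpose_mul_eq_zero {X Y : Matrix m n ℝ} (h : Xᵀ * Y = 0) :
    frobSq (X + Y) = frobSq X + frobSq Y := by
  have h' : Yᵀ * X = 0 := by simpa [transpose_mul] using congrArg transpose h
  simp only [frobSq_eq_trace_transpose_mul, transpose_add, Matrix.add_mul, Matrix.mul_add, h, h',
    trace_add, trace_zero]
  ring

theorem frobSq_mul_of_transpose_mul_self_eq_one [DecidableEq k] {U : Matrix m k ℝ}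
    (hU : Uᵀ * U = 1) (M : Matrix k n ℝ) : frobSq (U * M) = frobSq M := by
  rw [frobSq_eq_trace_transpose_mul, frobSq_eq_trace_transpose_mul, transpose_mul,
    Matrix.mul_assoc, ← Matrix.mul_assoc Uᵀ, hU, Matrix.one_mul]

theorem frobSq_mul_of_mul_transpose_self_eq_one [DecidableEq k] {W : Matrix k n ℝ}
    (hW : W * Wᵀ = 1) (M : Matrix m k ℝ) : frobSq (M * W) = frobSq M := by
  rw [frobSq_eq_trace_mul_transpose, frobSq_eq_trace_mul_transpose, transpose_mul,
    Matrix.mul_assoc, ← Matrix.mul_assoc W, hW, Matrix.one_mul]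

end Frobenius

section Blocks

variable {R m n r s p : Type*}

theorem fromBlocks_transpose_mul_self_eq_one [CommRing R] [Fintype m] [Fintype p] [DecidableEq r]
    [DecidableEq p] {U : Matrix m r R} (hU : Uᵀ * U = 1) :
    (fromBlocks U 0 0 (1 : Matrix p p R))ᵀ * fromBlocks U 0 0 (1 : Matrix p p R) = 1 := by
  simp [fromBlocks_transpose, fromBlocks_multiply, hU, fromBlocks_one]

theorem fromRows_mul_transpose_self_eq_one [CommRing R] [Fintype n] [DecidableEq r]
    [DecidableEq s] {V : Matrix r n R} {Q : Matrix s n R} (hV : V * Vᵀ = 1) (hQ : Q * Qᵀ = 1)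
    (hVQ : V * Qᵀ = 0) : fromRows V Q * (fromRows V Q)ᵀ = 1 := by
  have hQV : Q * Vᵀ = 0 := by simpa [transpose_mul] using congrArg transpose hVQ
  rw [transpose_fromRows, fromRows_mul_fromCols, hV, hQ, hVQ, hQV, fromBlocks_one]

theorem fromBlocks_mul_fromBlocks_mul_fromRows [Ring R] [Fintype r] [Fintype s] [Fintype p]
    [DecidableEq p] (U : Matrix m r R) (S : Matrix r r R) (P : Matrix p r R) (L : Matrix p s R)
    (V : Matrix r n R) (Q : Matrix s n R) :
    fromBlocks U 0 0 (1 : Matrix p p R) * fromBlocks S 0 P L * fromRows V Q =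
      fromRows (U * S * V) (P * V + L * Q) := by
  simp [fromBlocks_multiply, fromBlocks_mul_fromRows, Matrix.mul_assoc]

end Blocks

/-- Incremental SVD error decomposition (appendix of the paper). -/
theorem incremental_svd_error_decomposition
    {m n r s p rt : ℕ}
    (A E : Matrix (Fin m) (Fin n) ℝ)
    (U : Matrix (Fin m) (Fin r) ℝ)
    (V : Matrix (Fin r) (Fin n) ℝ)
    (Q : Matrix (Fin s) (Fin n) ℝ)
    (S : Matrix (Fin r) (Fin r) ℝ)
    (B : Matrix (Fin p) (Fin n) ℝ)
    (P : Matrix (Fin p) (Fin r) ℝ)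
    (L : Matrix (Fin p) (Fin s) ℝ)
    (U' : Matrix (Fin r ⊕ Fin p) (Fin rt) ℝ)
    (St : Matrix (Fin rt) (Fin rt) ℝ)
    (V' : Matrix (Fin rt) (Fin r ⊕ Fin s) ℝ)
    (E' : Matrix (Fin r ⊕ Fin p) (Fin r ⊕ Fin s) ℝ)
    (hU : Uᵀ * U = 1)
    (hV : V * Vᵀ = 1)
    (hQ : Q * Qᵀ = 1)
    (hVQ : V * Qᵀ = 0)
    (hA : A = U * S * V + E)
    (hUE : Uᵀ * E = 0)
    (hB : B = P * V + L * Q)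
    (hS' : Matrix.fromBlocks S 0 P L = U' * St * V' + E') :
    frobSq (Matrix.fromRows A B -
        Matrix.fromBlocks U 0 0 (1 : Matrix (Fin p) (Fin p) ℝ) * U' * St *
          (V' * Matrix.fromRows V Q)) =
      frobSq E + frobSq E' := by
  set Ub := fromBlocks U 0 0 (1 : Matrix (Fin p) (Fin p) ℝ)
  set W := fromRows V Q
  set E₀ := fromRows E (0 : Matrix (Fin p) (Fin n) ℝ)
  have residual : fromRows A B - Ub * U' * St * (V' * W) = E₀ + Ub * E' * W := by
    have hUSV : U' * St * V' = fromBlocks S 0 P L - E' := eq_sub_of_add_eq hS'.symm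
    have hblock : Ub * fromBlocks S 0 P L * W = fromRows (U * S * V) B := by
      rw [fromBlocks_mul_fromBlocks_mul_fromRows, hB]
    have hassoc : Ub * U' * St * (V' * W) = Ub * (U' * St * V') * W := by
      simp only [Matrix.mul_assoc]
    rw [hassoc, hUSV, Matrix.mul_sub, Matrix.sub_mul, hblock, hA]
    ext (i | i) j <;> simp [E₀]
  have orthogonal : E₀ᵀ * (Ub * E' * W) = 0 := by
    have hUbE : Ubᵀ * E₀ = 0 := by
      simp [Ub, E₀, fromBlocks_transpose, fromBlocks_mul_fromRows, hUE]
    rw [Matrix.mul_assoc, ← Matrix.mul_assoc, ← transpose_transpose Ub, ← transpose_mul,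
      hUbE, transpose_zero, Matrix.zero_mul]
  rw [residual, frobSq_add_of_transpose_mul_eq_zero orthogonal, frobSq_fromRows, frobSq_zero,
    add_zero,
    frobSq_mul_of_mul_transpose_self_eq_one (fromRows_mul_transpose_self_eq_one hV hQ hVQ),
    frobSq_mul_of_transpose_mul_self_eq_one (fromBlocks_transpose_mul_self_eq_one hU)]
end

section
/- Let X ∈ ℝ^{m×n₁}, Y ∈ ℝ^{m×n₂}, U ∈ ℝ^{m×r} with UᵀU = I_r, and W ∈ ℝ^{m×r′} with WᵀW = I_{r′} and WᵀU = 0. Let C ∈ ℝ^{r×n₁} be arbitrary, define P = UᵀY, E = Y − U P, K = WᵀE, let X̃ = [X, Y] ∈ ℝ^{m×(n₁+n₂)} be the horizontal concatenation, Ũ = [U, W] ∈ ℝ^{m×(r+r′)}, and let C̃ = [[C, P], [0, K]] ∈ ℝ^{(r+r′)×(n₁+n₂)}. Then ‖X̃ − Ũ C̃‖_F² = ‖X − U C‖_F² + ‖E − W K‖_F². -/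
/-! Because the lower-left block of `C̃` vanishes, `Ũ C̃ = [U C, U P + W K]`, so the residual
`X̃ - Ũ C̃` is the column concatenation of `X - U C` and `(Y - U P) - W K = E - W K`.
The squared Frobenius norm is a sum over columns, hence additive over column blocks. -/

open Matrix BigOperators

lemma Matrix.fromCols_sub_fromCols {R m n₁ n₂ : Type*} [Sub R]
    (A₁ : Matrix m n₁ R) (A₂ : Matrix m n₂ R) (B₁ : Matrix m n₁ R) (B₂ : Matrix m n₂ R) :
    fromCols A₁ A₂ - fromCols B₁ B₂ = fromCols (A₁ - B₁) (A₂ - B₂) := by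
  ext i (j | j) <;> rfl

lemma frobSq_fromCols {m n₁ n₂ : Type*} [Fintype m] [Fintype n₁] [Fintype n₂]
    (A : Matrix m n₁ ℝ) (B : Matrix m n₂ ℝ) :
    frobSq (fromCols A B) = frobSq A + frobSq B := by
  simp only [frobSq, Fintype.sum_sum_type, fromCols_apply_inl, fromCols_apply_inr,
    Finset.sum_add_distrib]

theorem nonstreaming_mode_error_decomposition_general
    {m n1 n2 r r' : ℕ}
    (X : Matrix (Fin m) (Fin n1) ℝ)
    (Y : Matrix (Fin m) (Fin n2) ℝ)
    (U : Matrix (Fin m) (Fin r) ℝ)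
    (W : Matrix (Fin m) (Fin r') ℝ)
    (C : Matrix (Fin r) (Fin n1) ℝ)
    (P : Matrix (Fin r) (Fin n2) ℝ)
    (E : Matrix (Fin m) (Fin n2) ℝ) (hE : E = Y - U * P)
    (K : Matrix (Fin r') (Fin n2) ℝ) :
    frobSq (Matrix.fromCols X Y -
        Matrix.fromCols U W * Matrix.fromBlocks C P 0 K) =
      frobSq (X - U * C) + frobSq (E - W * K) := by
  rw [fromCols_mul_fromBlocks, Matrix.mul_zero, add_zero, fromCols_sub_fromCols,
    frobSq_fromCols, hE, sub_add_eq_sub_sub]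

/-- Error decomposition for the non-streaming mode factor matrix update
(equation (18) of the paper). -/
theorem nonstreaming_mode_error_decomposition
    {m n1 n2 r r' : ℕ}
    (X : Matrix (Fin m) (Fin n1) ℝ)
    (Y : Matrix (Fin m) (Fin n2) ℝ)
    (U : Matrix (Fin m) (Fin r) ℝ)
    (W : Matrix (Fin m) (Fin r') ℝ)
    (C : Matrix (Fin r) (Fin n1) ℝ)
    (hU : Uᵀ * U = 1)
    (hW : Wᵀ * W = 1)
    (hWU : Wᵀ * U = 0)
    (P : Matrix (Fin r) (Fin n2) ℝ) (hP : P = Uᵀ * Y)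
    (E : Matrix (Fin m) (Fin n2) ℝ) (hE : E = Y - U * P)
    (K : Matrix (Fin r') (Fin n2) ℝ) (hK : K = Wᵀ * E) :
    frobSq (Matrix.fromCols X Y -
        Matrix.fromCols U W * Matrix.fromBlocks C P 0 K) =
      frobSq (X - U * C) + frobSq (E - W * K) :=
  nonstreaming_mode_error_decomposition_general X Y U W C P E hE K
end

section
/- Let A ∈ ℝ^{m×n}, P ∈ ℝ^{m×r}, S ∈ ℝ^{r×r}, and Q ∈ ℝ^{n×r} with QᵀQ = I_r, and let b ∈ ℝ^n. Define p = Qᵀb, e = b − Q p, k = ‖e‖₂, and suppose k ≠ 0; set q = e/k. Then the (m+1)×n matrix [A; bᵀ] obtained by appending the row bᵀ to A satisfies the exact identity [A; bᵀ] = [A − P S Qᵀ; 0] + blkdiag(P, 1)·S′·[Q, q]ᵀ, where S′ = [[S, 0], [pᵀ, k]] ∈ ℝ^{(r+1)×(r+1)}. -/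
open Matrix

/-!
Multiplying out the blocks, `blkdiag(P, 1) · S′ · [Q, q]ᵀ` is `P S Qᵀ` stacked on the row
`(Q p + k q)ᵀ`. The first block cancels against `A - P S Qᵀ`, and `Q p + k q = Q p + e = b`
because `q = e / k` and `e = b - Q p`.
-/

namespace Matrix

variable {α : Type*} {l l' m n o o' : Type*}

theorem fromBlocks_mul_fromBlocks_mul_transpose_fromCols [CommSemiring α] [Fintype l]
    [Fintype l'] [Fintype o] [Fintype o'] [DecidableEq o]
    (P : Matrix m l α) (S : Matrix l l' α) (C : Matrix o l' α) (D : Matrix o o' α)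
    (Q : Matrix n l' α) (R : Matrix n o' α) :
    fromBlocks P 0 0 (1 : Matrix o o α) * fromBlocks S 0 C D * (fromCols Q R)ᵀ =
      fromRows (P * S * Qᵀ) (C * Qᵀ + D * Rᵀ) := by
  rw [transpose_fromCols, fromBlocks_multiply, fromBlocks_mul_fromRows]
  simp

theorem of_const_mul_replicateRow [NonUnitalNonAssocSemiring α] [Fintype o] [Unique o] (k : α)
    (q : n → α) :
    (of fun _ _ => k : Matrix o o α) * replicateRow o q = replicateRow o (k • q) := by
  ext i j
  simp [mul_apply]

theorem fromRows_add [Add α] (A₁ B₁ : Matrix m n α) (A₂ B₂ : Matrix o n α) :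
    fromRows A₁ A₂ + fromRows B₁ B₂ = fromRows (A₁ + B₁) (A₂ + B₂) := by
  ext (i | i) j <;> rfl

theorem mulVec_add_smul_inv_smul_sub {K : Type*} [Field K] [Fintype l] (Q : Matrix n l K)
    (b : n → K) (p : l → K) {k : K} (hk : k ≠ 0) :
    Q *ᵥ p + k • k⁻¹ • (b - Q *ᵥ p) = b := by
  rw [smul_inv_smul₀ hk, add_sub_cancel]

end Matrix

theorem incremental_svd_row_update_identity_general
    {m n r : ℕ}
    (A : Matrix (Fin m) (Fin n) ℝ)
    (P : Matrix (Fin m) (Fin r) ℝ)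
    (S : Matrix (Fin r) (Fin r) ℝ)
    (Q : Matrix (Fin n) (Fin r) ℝ)
    (b : Fin n → ℝ)
    (p : Fin r → ℝ)
    (e : Fin n → ℝ) (he : e = b - Q *ᵥ p)
    (k : ℝ) (hk0 : k ≠ 0)
    (q : Fin n → ℝ) (hq : q = k⁻¹ • e) :
    Matrix.fromRows A (Matrix.of fun (_ : Fin 1) j => b j) =
      Matrix.fromRows (A - P * S * Qᵀ) 0 +
        Matrix.fromBlocks P 0 0 (1 : Matrix (Fin 1) (Fin 1) ℝ) *
          Matrix.fromBlocks S 0 (Matrix.of fun (_ : Fin 1) i => p i)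
            (Matrix.of fun (_ : Fin 1) (_ : Fin 1) => k) *
          (Matrix.fromCols Q (Matrix.of fun i (_ : Fin 1) => q i))ᵀ := by
  have hb : Q *ᵥ p + k • q = b := by
    rw [hq, he, mulVec_add_smul_inv_smul_sub Q b p hk0]
  change fromRows A (replicateRow (Fin 1) b) = _ + _ * fromBlocks S 0 (replicateRow (Fin 1) p) _ *
    (fromCols Q (replicateCol (Fin 1) q))ᵀ
  rw [fromBlocks_mul_fromBlocks_mul_transpose_fromCols, transpose_replicateCol,
    of_const_mul_replicateRow, ← hb, ← vecMul_transpose, replicateRow_add, replicateRow_vecMul,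
    fromRows_add, sub_add_cancel, zero_add]

/-- The exact factorization identity underlying the incremental SVD row
update (equations (26)–(27) of the paper). -/
theorem incremental_svd_row_update_identity
    {m n r : ℕ}
    (A : Matrix (Fin m) (Fin n) ℝ)
    (P : Matrix (Fin m) (Fin r) ℝ)
    (S : Matrix (Fin r) (Fin r) ℝ)
    (Q : Matrix (Fin n) (Fin r) ℝ)
    (b : Fin n → ℝ)
    (hQ : Qᵀ * Q = 1)
    (p : Fin r → ℝ) (hp : p = Qᵀ *ᵥ b)
    (e : Fin n → ℝ) (he : e = b - Q *ᵥ p)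
    (k : ℝ) (hk : k = Real.sqrt (∑ i, e i ^ 2)) (hk0 : k ≠ 0)
    (q : Fin n → ℝ) (hq : q = k⁻¹ • e) :
    Matrix.fromRows A (Matrix.of fun (_ : Fin 1) j => b j) =
      Matrix.fromRows (A - P * S * Qᵀ) 0 +
        Matrix.fromBlocks P 0 0 (1 : Matrix (Fin 1) (Fin 1) ℝ) *
          Matrix.fromBlocks S 0 (Matrix.of fun (_ : Fin 1) i => p i)
            (Matrix.of fun (_ : Fin 1) (_ : Fin 1) => k) *
          (Matrix.fromCols Q (Matrix.of fun i (_ : Fin 1) => q i))ᵀ :=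
  incremental_svd_row_update_identity_general A P S Q b p e he k hk0 q hq
end

section
/- Let A ∈ ℝ^{m×n}, let U ∈ ℝ^{m×r} have orthonormal columns (UᵀU = I_r), and let V ∈ ℝ^{n×s} have orthonormal columns (VᵀV = I_s). Then ‖A − U Uᵀ A V Vᵀ‖_F² ≤ ‖A − U Uᵀ A‖_F² + ‖A − A V Vᵀ‖_F². Consequently, if ‖A − U Uᵀ A‖_F ≤ (τ/√2)‖A‖_F and ‖A − A V Vᵀ‖_F ≤ (τ/√2)‖A‖_F for some τ > 0, then ‖A − U Uᵀ A V Vᵀ‖_F ≤ τ‖A‖_F. -/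
open Matrix BigOperators

/-- Frobenius norm of a real matrix. -/
noncomputable def frob {m n : Type*} [Fintype m] [Fintype n] (M : Matrix m n ℝ) : ℝ :=
  Real.sqrt (frobSq M)

lemma frobSq_eq_trace {m n : Type*} [Fintype m] [Fintype n] (M : Matrix m n ℝ) :
    frobSq M = Matrix.trace (Mᵀ * M) := by
  simp only [frobSq, Matrix.trace, Matrix.diag, Matrix.mul_apply, Matrix.transpose_apply, sq]
  rw [Finset.sum_comm]

lemma frobSq_nonneg {m n : Type*} [Fintype m] [Fintype n] (M : Matrix m n ℝ) :
    0 ≤ frobSq M :=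
  Finset.sum_nonneg fun _ _ => Finset.sum_nonneg fun _ _ => sq_nonneg _

/-- The `d = 2` (matrix) instance of the ST-HOSVD error guarantee
(equations (8)–(10) of the paper). -/
theorem st_hosvd_matrix_error_guarantee
    {m n r s : ℕ}
    (A : Matrix (Fin m) (Fin n) ℝ)
    (U : Matrix (Fin m) (Fin r) ℝ)
    (V : Matrix (Fin n) (Fin s) ℝ)
    (hU : Uᵀ * U = 1)
    (hV : Vᵀ * V = 1) :
    frobSq (A - U * Uᵀ * A * (V * Vᵀ)) ≤
        frobSq (A - U * Uᵀ * A) + frobSq (A - A * (V * Vᵀ)) ∧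
      ∀ τ : ℝ, 0 < τ →
        frob (A - U * Uᵀ * A) ≤ τ / Real.sqrt 2 * frob A →
        frob (A - A * (V * Vᵀ)) ≤ τ / Real.sqrt 2 * frob A →
        frob (A - U * Uᵀ * A * (V * Vᵀ)) ≤ τ * frob A := by
  set P : Matrix (Fin m) (Fin m) ℝ := U * Uᵀ with hPdef
  set Q : Matrix (Fin n) (Fin n) ℝ := V * Vᵀ with hQdef
  have hPt : Pᵀ = P := by simp [hPdef, Matrix.transpose_mul]
  have hPP : P * P = P := by
    rw [hPdef, Matrix.mul_assoc, ← Matrix.mul_assoc Uᵀ U Uᵀ, hU, Matrix.one_mul]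
  set X : Matrix (Fin m) (Fin n) ℝ := A - P * A with hXdef
  set W : Matrix (Fin m) (Fin n) ℝ := A - A * Q with hWdef
  have hdec : A - P * A * Q = X + P * W := by
    rw [hXdef, hWdef, Matrix.mul_sub, Matrix.mul_assoc]; abel
  have hXtP : Xᵀ * P = 0 := by
    rw [hXdef, Matrix.transpose_sub, Matrix.transpose_mul, hPt, Matrix.sub_mul,
      Matrix.mul_assoc, hPP, sub_self]
  -- Pythagoras: frobSq (X + P*W) = frobSq X + frobSq (P*W)
  have hpyth : frobSq (X + P * W) = frobSq X + frobSq (P * W) := by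
    rw [frobSq_eq_trace, frobSq_eq_trace, frobSq_eq_trace]
    have h1 : Xᵀ * (P * W) = 0 := by rw [← Matrix.mul_assoc, hXtP, Matrix.zero_mul]
    have h2 : (P * W)ᵀ * X = 0 := by
      have := congrArg Matrix.transpose h1
      simpa [Matrix.transpose_mul] using this
    rw [Matrix.transpose_add, Matrix.add_mul, Matrix.mul_add, Matrix.mul_add,
      h1, h2]
    simp [Matrix.trace_add]
  -- contraction: frobSq (P*W) ≤ frobSq W
  have hcontr : frobSq (P * W) ≤ frobSq W := by
    have key : frobSq W - frobSq (P * W) = frobSq (W - P * W) := by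
      rw [frobSq_eq_trace, frobSq_eq_trace, frobSq_eq_trace]
      have e1 : (P * W)ᵀ * (P * W) = Wᵀ * (P * W) := by
        rw [Matrix.transpose_mul, hPt, Matrix.mul_assoc, ← Matrix.mul_assoc P P W, hPP]
      have hPPW : P * (P * W) = P * W := by rw [← Matrix.mul_assoc, hPP]
      have e2 : (W - P * W)ᵀ * (W - P * W) = Wᵀ * W - Wᵀ * (P * W) := by
        simp only [Matrix.transpose_sub, Matrix.transpose_mul, hPt, Matrix.sub_mul,
          Matrix.mul_sub, Matrix.mul_assoc, hPPW]
        abel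
      rw [e1, e2, Matrix.trace_sub]
    nlinarith [frobSq_nonneg (W - P * W)]
  have hmain : frobSq (A - P * A * Q) ≤ frobSq X + frobSq W := by
    rw [hdec, hpyth]
    linarith
  refine ⟨hmain, ?_⟩
  intro τ hτ h1 h2
  have hfrob_nonneg : ∀ (M : Matrix (Fin m) (Fin n) ℝ), 0 ≤ frob M :=
    fun M => Real.sqrt_nonneg _
  have hsq : ∀ (M : Matrix (Fin m) (Fin n) ℝ), frob M ^ 2 = frobSq M :=
    fun M => Real.sq_sqrt (frobSq_nonneg M)
  have hA : 0 ≤ frob A := hfrob_nonneg A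
  have hb : 0 ≤ τ / Real.sqrt 2 * frob A := by
    have : (0:ℝ) < Real.sqrt 2 := by positivity
    positivity
  have h1' : frobSq X ≤ (τ / Real.sqrt 2 * frob A) ^ 2 := by
    rw [← hsq X]; exact pow_le_pow_left₀ (hfrob_nonneg X) h1 2
  have h2' : frobSq W ≤ (τ / Real.sqrt 2 * frob A) ^ 2 := by
    rw [← hsq W]; exact pow_le_pow_left₀ (hfrob_nonneg W) h2 2
  have hs2 : Real.sqrt 2 ^ 2 = 2 := Real.sq_sqrt (by norm_num)
  have hbound : frobSq (A - P * A * Q) ≤ (τ * frob A) ^ 2 := by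
    have key : (τ / Real.sqrt 2 * frob A) ^ 2 * 2 = (τ * frob A) ^ 2 := by
      rw [mul_pow, div_pow, hs2, mul_pow]; ring
    linarith [hmain, h1', h2']
  have : frob (A - P * A * Q) ^ 2 ≤ (τ * frob A) ^ 2 := by
    rw [hsq]; exact hbound
  have hτA : 0 ≤ τ * frob A := mul_nonneg hτ.le hA
  nlinarith [hfrob_nonneg (A - P * A * Q), this, hτA]
end

section
/- Let J ∈ ℕ, let x : Fin m → ℝ be arbitrary sample points, and for each column index j ∈ Fin n let coefficients c : {−J, …, J} → ℝ and phases θ : {−J, …, J} → ℝ be given (both possibly depending on j). Define the matrix A ∈ ℝ^{m×n} by A(i, j) = Σ_{k=−J}^{J} c(k, j) · sin(k · x(i) + θ(k, j)). Then the rank of A is at most 2J + 1. -/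
open Matrix BigOperators

lemma sum_Icc_neg_decomp (J : ℕ) (f : ℤ → ℝ) :
    ∑ k ∈ Finset.Icc (-(J:ℤ)) (J:ℤ), f k
      = f 0 + ∑ k ∈ Finset.Icc (1:ℤ) (J:ℤ), (f (-k) + f k) := by
  induction J with
  | zero => simp
  | succ J ih =>
      have h1 : Finset.Icc (-((J:ℤ)+1)) ((J:ℤ)+1)
          = insert (-((J:ℤ)+1)) (insert ((J:ℤ)+1) (Finset.Icc (-(J:ℤ)) (J:ℤ))) := by
        ext k; simp only [Finset.mem_Icc, Finset.mem_insert]; omega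
      have h2 : Finset.Icc (1:ℤ) ((J:ℤ)+1) = insert ((J:ℤ)+1) (Finset.Icc (1:ℤ) (J:ℤ)) := by
        ext k; simp only [Finset.mem_Icc, Finset.mem_insert]; omega
      push_cast
      rw [h1, h2, Finset.sum_insert (by simp only [Finset.mem_insert, Finset.mem_Icc]; omega),
        Finset.sum_insert (by simp only [Finset.mem_Icc]; omega),
        Finset.sum_insert (by simp only [Finset.mem_Icc]; omega), ih]
      ring

/-- The "sine wave" data matrix has rank at most `2J + 1`. -/
theorem sine_wave_matrix_rank_le
    {m n : ℕ} (J : ℕ)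
    (x : Fin m → ℝ)
    (c θ : ℤ → Fin n → ℝ)
    (A : Matrix (Fin m) (Fin n) ℝ)
    (hA : ∀ i j, A i j =
      ∑ k ∈ Finset.Icc (-(J : ℤ)) (J : ℤ), c k j * Real.sin (k * x i + θ k j)) :
    A.rank ≤ 2 * J + 1 := by
  set S : Finset ℤ := Finset.Icc (-(J : ℤ)) (J : ℤ) with hS
  set B : Matrix (Fin m) S ℝ := fun i k =>
    if (k : ℤ) < 0 then Real.sin ((k : ℤ) * x i) else Real.cos ((k : ℤ) * x i) with hB
  set C : Matrix S (Fin n) ℝ := fun k j =>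
    if (k : ℤ) < 0 then
      c k j * Real.cos (θ k j) - c (-(k : ℤ)) j * Real.cos (θ (-(k : ℤ)) j)
    else
      c k j * Real.sin (θ k j) +
        (if (k : ℤ) = 0 then 0 else c (-(k : ℤ)) j * Real.sin (θ (-(k : ℤ)) j)) with hC
  have hAB : A = B * C := by
    ext i j
    rw [hA, mul_apply]
    have : ∑ k : S, B i k * C k j
        = ∑ k ∈ S, ((if k < 0 then Real.sin (k * x i) else Real.cos (k * x i)) *
            (if k < 0 then
              c k j * Real.cos (θ k j) - c (-k) j * Real.cos (θ (-k) j)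
            else
              c k j * Real.sin (θ k j) +
                (if k = 0 then 0 else c (-k) j * Real.sin (θ (-k) j)))) := by
      rw [← Finset.sum_coe_sort S]
    rw [this, hS, sum_Icc_neg_decomp, sum_Icc_neg_decomp]
    congr 1
    · simp [Real.cos_zero]
    · refine Finset.sum_congr rfl fun k hk => ?_
      rw [Finset.mem_Icc] at hk
      have h1 : (-k : ℤ) < 0 := by omega
      have h2 : ¬ ((k : ℤ) < 0) := by omega
      have h3 : ¬((k : ℤ) = 0) := by omega
      have h4 : ¬((-k : ℤ) = 0) := by omega
      simp only [if_pos h1, if_neg h2, if_neg h3, if_neg h4, neg_neg]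
      have hnk : ((-k : ℤ) : ℝ) * x i = -((k : ℤ) * x i) := by push_cast; ring
      rw [hnk, Real.sin_add, Real.sin_add, Real.sin_neg, Real.cos_neg]
      ring
  have hcard : Fintype.card S = 2 * J + 1 := by
    rw [Fintype.card_coe, hS, Int.card_Icc]
    omega
  calc A.rank = (B * C).rank := by rw [hAB]
    _ ≤ B.rank := Matrix.rank_mul_le_left B C
    _ ≤ Fintype.card S := B.rank_le_card_width
    _ = 2 * J + 1 := hcard
end
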